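/- arXiv:2206.11716 — 2 statements merged into one kernel-verified Lean document; each statement's English description precedes it below -/
import Mathlib

section
/- Let N be a normal subgroup of a finite group G, let M/N be a non-abelian chief factor of G, and let λ be an irreducible character of N. If λ extends to an irreducible character λ₀ of M, then the inertia group of λ in G equals the inertia group of λ₀ in G. -/
open scoped BigOperators Classical
open CategoryTheory

/-- `χ : G → ℂ` is the character of an irreducible complex representation of `G`. -/
def IsIrrChar (G : Type) [Group G] (χ : G → ℂ) : Prop :=
  ∃ V : FDRep ℂ G, Simple V ∧ ∀ g, V.character g = χ g

/-- A character is rational-valued if all its values lie in `ℚ`. -/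
def RatValued {G : Type} (χ : G → ℂ) : Prop := ∀ g, ∃ q : ℚ, χ g = (q : ℂ)

/-- A character is real-valued if all its values lie in `ℝ`. -/
def RealValued {G : Type} (χ : G → ℂ) : Prop := ∀ g, (χ g).im = 0

/-- A character has even degree. -/
def EvenDeg {G : Type} [One G] (χ : G → ℂ) : Prop := ∃ k : ℕ, χ 1 = ((2 * k : ℕ) : ℂ)

/-- The kernel of the character `χ` contains the subgroup `N`. -/
def KerContains {G : Type} [Group G] (χ : G → ℂ) (N : Subgroup G) : Prop :=
  ∀ n ∈ N, χ n = χ 1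

/-- The induced class function `f ^ G` of `f : N → ℂ`. -/
noncomputable def Ind {G : Type} [Group G] [Fintype G] (N : Subgroup G) (f : ↥N → ℂ) : G → ℂ :=
  fun g => (Nat.card N : ℂ)⁻¹ *
    ∑ x : G, if h : x⁻¹ * g * x ∈ N then f ⟨x⁻¹ * g * x, h⟩ else 0

/-- The standard inner product of class functions on a finite group. -/
noncomputable def cInner {G : Type} [Fintype G] (f g : G → ℂ) : ℂ :=
  (Fintype.card G : ℂ)⁻¹ * ∑ x : G, f x * (starRingEnd ℂ) (g x)

/-- `χ` is an irreducible constituent of the class function `f`. -/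
def IsConstituent {G : Type} [Group G] [Fintype G] (f χ : G → ℂ) : Prop :=
  IsIrrChar G χ ∧ cInner f χ ≠ 0

lemma lam_congr {G : Type} [Group G] {N : Subgroup G} (lam : ↥N → ℂ)
    {x y : G} (px : x ∈ N) (py : y ∈ N) (h : x = y) : lam ⟨x, px⟩ = lam ⟨y, py⟩ := by
  subst h; rfl

/-- The inertia group `I_G(λ)` of a character `λ` of a normal subgroup `N` of `G`. -/
def inertia {G : Type} [Group G] (N : Subgroup G) [hN : N.Normal] (lam : ↥N → ℂ) :
    Subgroup G where
  carrier := {g | ∀ n : ↥N, lam ⟨g * n * g⁻¹, hN.conj_mem n n.2 g⟩ = lam n}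
  one_mem' := by
    intro n
    exact lam_congr lam _ n.2 (by group)
  mul_mem' := by
    intro a b ha hb n
    have h1 := ha ⟨(b : G) * n * b⁻¹, hN.conj_mem _ n.2 b⟩
    calc lam ⟨(a * b) * n * (a * b)⁻¹, _⟩
        = lam ⟨a * ((b : G) * n * b⁻¹) * a⁻¹, hN.conj_mem _ (hN.conj_mem _ n.2 b) a⟩ :=
          lam_congr lam _ _ (by group)
      _ = lam ⟨(b : G) * n * b⁻¹, hN.conj_mem _ n.2 b⟩ := h1
      _ = lam n := hb n
  inv_mem' := by
    intro a ha n
    have h1 := ha ⟨a⁻¹ * (n : G) * a⁻¹⁻¹, hN.conj_mem _ n.2 a⁻¹⟩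
    have h2 : lam ⟨a * (a⁻¹ * (n : G) * a⁻¹⁻¹) * a⁻¹,
        hN.conj_mem _ (hN.conj_mem _ n.2 a⁻¹) a⟩ = lam n :=
      lam_congr lam _ n.2 (by group)
    exact h1.symm.trans h2

/-!
Let `g` stabilise `λ` and let `W` afford `λ₀`. The restrictions to `N` of `W` and of its conjugate
`W^g` both afford `λ = λ^g`, so they are isomorphic irreducible representations and, by Schur, the
`N`-intertwiners `W → W^g` form a line. The group `M` acts on this line by
`T ↦ W^g(m) ∘ T ∘ W(m)⁻¹`, through a linear character of `M` that is trivial on `N`, hence on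
`N ⊔ [M, M]`. Since `M/N` is a non-abelian chief factor, `N ⊔ [M, M] = M`, so the `N`-isomorphism
`W → W^g` is `M`-equivariant and `λ₀^g = λ₀`. The reverse inclusion holds because `λ₀` restricts
to `λ`.
-/

open Module Representation
open scoped commutatorElement

universe u v

namespace Subgroup

variable {G : Type*} [Group G] {N M : Subgroup G}

theorem le_sup_commutator_of_minimal [N.Normal] [M.Normal] (hNM : N ≤ M)
    (hmin : ∀ K : Subgroup G, K.Normal → N ≤ K → K ≤ M → K = N ∨ K = M)
    (hnonab : ¬ ∀ a ∈ M, ∀ b ∈ M, a * b * a⁻¹ * b⁻¹ ∈ N) : M ≤ N ⊔ ⁅M, M⁆ := by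
  rcases hmin _ inferInstance le_sup_left (sup_le hNM M.commutator_le_self) with h | h
  · refine absurd (fun a ha b hb => ?_) hnonab
    rw [← commutatorElement_def, ← h]
    exact mem_sup_right (commutator_mem_commutator ha hb)
  · exact h.ge

theorem range_inclusion_eq_subgroupOf (hNM : N ≤ M) : (inclusion hNM).range = N.subgroupOf M := by
  ext
  simp [mem_subgroupOf]

theorem range_inclusion_sup_commutator_eq_top (hNM : N ≤ M) (h : M ≤ N ⊔ ⁅M, M⁆) :
    (inclusion hNM).range ⊔ _root_.commutator M = ⊤ := by
  refine map_injective M.subtype_injective ?_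
  rw [map_sup, MonoidHom.map_range, subtype_comp_inclusion, map_subtype_commutator,
    ← MonoidHom.range_eq_map, range_subtype, range_subtype]
  exact le_antisymm (sup_le hNM M.commutator_le_self) h

end Subgroup

namespace FDRep

variable {k : Type u} {G : Type v} [Field k] [Group G]

theorem injective_of_mono {V W : FDRep k G} (f : V ⟶ W) [Mono f] :
    Function.Injective (ConcreteCategory.hom f) :=
  (ModuleCat.mono_iff_injective _).mp
    ((forget₂ (FGModuleCat k) (ModuleCat k)).map_mono ((Action.forget (FGModuleCat k) G).map f))

variable [IsAlgClosed k] [CharZero k] [Fintype G]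

theorem card_inv_mul_sum_char_mul_char_inv_eq_one (U : FDRep k G) [Simple U] :
    (Nat.card G : k)⁻¹ * ∑ g : G, U.character g * U.character g⁻¹ = 1 := by
  have : Invertible (Nat.card G : k) := invertibleOfNonzero (by simp)
  rw [char_orthonormal, if_pos ⟨Iso.refl U⟩]

theorem nonempty_iso_of_character_eq {V W : FDRep k G} [Simple V]
    (h : V.character = W.character) : Nonempty (V ≅ W) := by
  have : Invertible (Nat.card G : k) := invertibleOfNonzero (by simp)
  have hrank : finrank k (V ⟶ W) = 1 := by
    have := scalar_product_char_eq_finrank_equivariant V W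
    rw [← h, card_inv_mul_sum_char_mul_char_inv_eq_one] at this
    exact_mod_cast this.symm
  obtain ⟨f, hf⟩ := (finrank_pos_iff_exists_ne_zero (R := k)).mp (hrank ▸ Nat.one_pos)
  have : Mono f := mono_of_nonzero_from_simple hf
  have hdim : finrank k V = finrank k W := by
    exact_mod_cast (V.char_one.symm.trans (congrFun h 1)).trans W.char_one
  have hinj := injective_of_mono f
  have : IsIso f := (ConcreteCategory.isIso_iff_bijective f).mpr
    ⟨hinj, (LinearMap.injective_iff_surjective_of_finrank_eq_finrank hdim
      (f := f.hom.hom.hom)).mp hinj⟩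
  exact ⟨asIso f⟩

end FDRep

namespace Representation

section LineStabiliser

variable {k M H X V W : Type*} [Field k] [Group M] [Group H] [AddCommGroup X] [Module k X]

theorem apply_eq_self_of_sup_commutator_eq_top (ψ : Representation k M X) {N : Subgroup M}
    (hgen : N ⊔ commutator M = ⊤) {x : X} (hx : x ≠ 0) (hline : ∀ m, ∃ c : k, ψ m x = c • x)
    (hN : ∀ n ∈ N, ψ n x = x) (m : M) : ψ m x = x := by
  choose c hc using hline
  have hinj : Function.Injective (· • x : k → X) := smul_left_injective k hx
  let χ : M →* k :=
    { toFun := c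
      map_one' := hinj <| by simp only [← hc, map_one, one_smul, Module.End.one_apply]
      map_mul' := fun a b => hinj <| by
        show c (a * b) • x = (c a * c b) • x
        rw [← hc, map_mul, Module.End.mul_apply, hc, map_smul, hc, smul_smul, mul_comm] }
  have hN' : N ≤ χ.toHomUnits.ker := fun n hn => by
    rw [MonoidHom.mem_ker, Units.ext_iff]
    exact hinj (by simp [χ, ← hc, hN n hn])
  have hm : c m = 1 := by
    have := (hgen ▸ sup_le hN' (Abelianization.commutator_subset_ker _) : ⊤ ≤ χ.toHomUnits.ker)
      (Subgroup.mem_top m)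
    rwa [MonoidHom.mem_ker, Units.ext_iff] at this
  rw [hc, hm, one_smul]

theorem mem_invariants_of_finrank_invariants_comp_eq_one (ψ : Representation k M X)
    (ι : H →* M) [ι.range.Normal] (hgen : ι.range ⊔ commutator M = ⊤)
    (hdim : finrank k (invariants (ψ.comp ι)) = 1) {x : X} (hx : x ∈ invariants (ψ.comp ι)) :
    x ∈ invariants ψ := by
  rcases eq_or_ne x 0 with rfl | hx0
  · exact zero_mem _
  have hstable : ∀ m, ψ m x ∈ invariants (ψ.comp ι) := by
    intro m h
    obtain ⟨h', hh'⟩ := Subgroup.Normal.conj_mem' ‹_› _ (⟨h, rfl⟩ : ι h ∈ ι.range) m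
    have hconj : ι h * m = m * ι h' := by rw [hh']; group
    calc ψ (ι h) (ψ m x) = ψ (ι h * m) x := by rw [map_mul]; rfl
      _ = ψ m (ψ (ι h') x) := by rw [hconj, map_mul]; rfl
      _ = ψ m x := congrArg (ψ m) (hx h')
  refine apply_eq_self_of_sup_commutator_eq_top ψ hgen hx0 (fun m => ?_) ?_
  · obtain ⟨c, hc⟩ := (finrank_eq_one_iff_of_nonzero' (⟨x, hx⟩ : invariants (ψ.comp ι))
      (by simpa using hx0)).mp hdim ⟨ψ m x, hstable m⟩
    exact ⟨c, congrArg Subtype.val hc.symm⟩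
  · rintro _ ⟨h, rfl⟩
    exact hx h

theorem isIntertwiningMap_of_finrank_intertwiningMap_comp_eq_one
    [AddCommGroup V] [Module k V] [AddCommGroup W] [Module k W]
    (ρ : Representation k M V) (σ : Representation k M W)
    (ι : H →* M) [ι.range.Normal] (hgen : ι.range ⊔ commutator M = ⊤)
    (hdim : finrank k (IntertwiningMap (ρ.comp ι) (σ.comp ι)) = 1) {f : V →ₗ[k] W}
    (hf : IsIntertwiningMap (ρ.comp ι) (σ.comp ι) f) : IsIntertwiningMap ρ σ f := by
  have hlin : (linHom ρ σ).comp ι = linHom (ρ.comp ι) (σ.comp ι) := by ext; simp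
  rw [← mem_linHom_invariants_iff_isIntertwining] at hf ⊢
  refine mem_invariants_of_finrank_invariants_comp_eq_one (linHom ρ σ) ι hgen ?_ ?_
  · rw [hlin, (invariantsEquivIntertwiningMap _ _).finrank_eq, hdim]
  · rw [hlin]
    exact hf

end LineStabiliser

section CharacterEq

variable {k : Type u} {G : Type v} {M : Type*} {V W : Type u} [Field k] [IsAlgClosed k]
  [CharZero k] [Group G] [Fintype G] [Group M] [AddCommGroup V] [Module k V] [FiniteDimensional k V]
  [AddCommGroup W] [Module k W] [FiniteDimensional k W] (U : FDRep k G) [Simple U]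

include U in
theorem finrank_intertwiningMap_eq_one_of_character_eq {ρ : Representation k G V}
    {σ : Representation k G W} (hρ : ρ.character = U.character) (hσ : σ.character = U.character) :
    finrank k (IntertwiningMap ρ σ) = 1 := by
  have : Invertible (Nat.card G : k) := invertibleOfNonzero (by simp)
  have := card_inv_mul_sum_char_mul_char_eq_finrank ρ σ
  rw [hρ, hσ, FDRep.card_inv_mul_sum_char_mul_char_inv_eq_one] at this
  exact_mod_cast this.symm

include U in
theorem nonempty_equiv_of_character_eq {ρ : Representation k G V} {σ : Representation k G W}
    (hρ : ρ.character = U.character) (hσ : σ.character = U.character) :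
    Nonempty (ρ.Equiv σ) := by
  obtain ⟨eρ⟩ := FDRep.nonempty_iso_of_character_eq (W := FDRep.of ρ) hρ.symm
  obtain ⟨eσ⟩ := FDRep.nonempty_iso_of_character_eq (W := FDRep.of σ) hσ.symm
  let e := eρ.symm ≪≫ eσ
  refine ⟨Equiv.mk (FDRep.isoToLinearEquiv e) fun g => ?_⟩
  have hconj : σ g = (FDRep.isoToLinearEquiv e).conj (ρ g) := FDRep.Iso.conj_ρ e g
  rw [hconj, LinearEquiv.conj_apply]
  ext v
  simp

include U in
theorem nonempty_equiv_of_character_comp_eq (ρ : Representation k M V)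
    (σ : Representation k M W) (ι : G →* M) [ι.range.Normal]
    (hgen : ι.range ⊔ commutator M = ⊤) (hρ : character (ρ.comp ι) = U.character)
    (hσ : character (σ.comp ι) = U.character) : Nonempty (ρ.Equiv σ) := by
  obtain ⟨e⟩ := nonempty_equiv_of_character_eq U hρ hσ
  have he := isIntertwiningMap_of_finrank_intertwiningMap_comp_eq_one ρ σ ι hgen
    (finrank_intertwiningMap_eq_one_of_character_eq U hρ hσ) ⟨e.isIntertwining⟩
  exact ⟨Equiv.mk e.toLinearEquiv fun m => LinearMap.ext (he.isIntertwining m)⟩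

end CharacterEq

end Representation

theorem inertia_le_inertia_of_restrict_eq {G : Type} [Group G] {N M : Subgroup G} [N.Normal]
    [M.Normal] (hNM : N ≤ M) {lam : ↥N → ℂ} {lam0 : ↥M → ℂ}
    (hext : ∀ (n : G) (hn : n ∈ N), lam0 ⟨n, hNM hn⟩ = lam ⟨n, hn⟩) :
    inertia M lam0 ≤ inertia N lam :=
  fun _ hx n => (hext _ _).symm.trans ((hx ⟨n, hNM n.2⟩).trans (hext _ _))

theorem inertia_le_inertia_of_le_sup_commutator {G : Type} [Group G] [Fintype G]
    {N M : Subgroup G} [hN : N.Normal] [M.Normal] (hNM : N ≤ M) (hgen : M ≤ N ⊔ ⁅M, M⁆)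
    {lam : ↥N → ℂ} (hlam : IsIrrChar ↥N lam) (W : FDRep ℂ ↥M)
    (hext : ∀ (n : G) (hn : n ∈ N), W.character ⟨n, hNM hn⟩ = lam ⟨n, hn⟩) :
    inertia N lam ≤ inertia M W.character := by
  intro g hg m
  obtain ⟨U, hU, hUlam⟩ := hlam
  have : (Subgroup.inclusion hNM).range.Normal := by
    rw [Subgroup.range_inclusion_eq_subgroupOf]
    infer_instance
  have hconj (n : ↥N) : MulAut.conjNormal (H := M) g (Subgroup.inclusion hNM n) =
      ⟨g * n * g⁻¹, hNM (hN.conj_mem n n.2 g)⟩ :=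
    Subtype.ext (MulAut.conjNormal_apply _ _)
  obtain ⟨e⟩ := Representation.nonempty_equiv_of_character_comp_eq U W.ρ
    (W.ρ.comp (MulAut.conjNormal (H := M) g).toMonoidHom) (Subgroup.inclusion hNM)
    (Subgroup.range_inclusion_sup_commutator_eq_top hNM hgen)
    (funext fun n => (hext n n.2).trans (hUlam n).symm)
    (funext fun n => (congrArg W.character (hconj n)).trans
      ((hext _ (hN.conj_mem n n.2 g)).trans ((hg n).trans (hUlam n).symm)))
  exact (congrFun (char_iso e) m).symm

/-- If `M/N` is a non-abelian chief factor of `G` and `λ ∈ Irr(N)` extends to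
`λ₀ ∈ Irr(M)`, then `I_G(λ) = I_G(λ₀)`. -/
theorem stmt1 (G : Type) [Group G] [Fintype G] (N M : Subgroup G)
    [hN : N.Normal] [hM : M.Normal] (hNM : N ≤ M)
    (hchief : N ≠ M ∧ ∀ K : Subgroup G, K.Normal → N ≤ K → K ≤ M → K = N ∨ K = M)
    (hnonab : ¬ ∀ a ∈ M, ∀ b ∈ M, a * b * a⁻¹ * b⁻¹ ∈ N)
    (lam : ↥N → ℂ) (hlam : IsIrrChar ↥N lam)
    (lam0 : ↥M → ℂ) (hlam0 : IsIrrChar ↥M lam0)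
    (hext : ∀ (n : G) (hn : n ∈ N), lam0 ⟨n, hNM hn⟩ = lam ⟨n, hn⟩) :
    inertia N lam = inertia M lam0 := by
  obtain ⟨W, -, hW⟩ := hlam0
  obtain rfl : W.character = lam0 := funext hW
  exact le_antisymm
    (inertia_le_inertia_of_le_sup_commutator hNM
      (Subgroup.le_sup_commutator_of_minimal hNM hchief.2 hnonab) hlam W hext)
    (inertia_le_inertia_of_restrict_eq hNM hext)
end

section
/- Let M ≅ PSL(2,7) be a minimal normal subgroup of a finite group G. Then every non-linear rational-valued irreducible character of G whose kernel does not contain M has degree at least 6. -/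
open scoped BigOperators Classical
open CategoryTheory

/-! Let `u ∈ M` have order `7`. If the character of `V` is not constant on `M`, then `ker V ⊓ M`
is a normal subgroup of `G` properly contained in `M`, hence trivial, so `V.ρ u ≠ 1`. The
eigenvalues of `V.ρ u` are `7`-th roots of unity with rational sum; since `1 + X + ⋯ + X⁶` is the
minimal polynomial over `ℚ` of a primitive `7`-th root of unity, the six nontrivial ones occur with
equal multiplicity. That multiplicity is positive because `V.ρ u` is diagonalizable and `≠ 1`,
so `dim V ≥ 6`. -/

open Polynomial Module

theorem IsPrimitiveRoot.coeff_eq_leadingCoeff_of_aeval_eq_zero {K : Type*} [Field K]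
    [CharZero K] {p : ℕ} [hp : Fact p.Prime] {ζ : K} (hζ : IsPrimitiveRoot ζ p) {f : ℚ[X]}
    (hf : f.natDegree < p) (hζf : aeval ζ f = 0) {k : ℕ} (hk : k < p) :
    f.coeff k = f.leadingCoeff := by
  have hdvd : cyclotomic p ℚ ∣ f := by
    rw [cyclotomic_eq_minpoly_rat hζ hp.out.pos]
    exact minpoly.dvd ℚ ζ hζf
  have hdeg : f.natDegree ≤ (cyclotomic p ℚ).natDegree := by
    rw [natDegree_cyclotomic, Nat.totient_prime hp.out]
    omega
  conv_lhs => rw [eq_mul_leadingCoeff_of_monic_of_dvd_of_natDegree_le (cyclotomic.monic p ℚ)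
    hdvd hdeg, coeff_mul_C, cyclotomic_prime, finsetSum_coeff]
  simp [coeff_X_pow, hk]

theorem Multiset.sub_one_le_card_of_pow_eq_one_of_sum_eq_ratCast {K : Type*} [Field K]
    [CharZero K] {p : ℕ} [hp : Fact p.Prime] {s : Multiset K} (hs : ∀ x ∈ s, x ^ p = 1)
    {ζ : K} (hζs : ζ ∈ s) (hζ1 : ζ ≠ 1) {q : ℚ} (hsum : s.sum = q) : p - 1 ≤ card s := by
  have hζ : IsPrimitiveRoot ζ p :=
    IsPrimitiveRoot.iff_orderOf.mpr (orderOf_eq_prime (hs ζ hζs) hζ1)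
  have hinj : Set.InjOn (ζ ^ ·) (Finset.range p) := fun i hi j hj h =>
    hζ.pow_inj (Finset.mem_range.mp hi) (Finset.mem_range.mp hj) h
  have hsub : s.toFinset ⊆ (Finset.range p).image (ζ ^ ·) := by
    intro x hx
    obtain ⟨k, hk, rfl⟩ := hζ.eq_pow_of_pow_eq_one (hs x (Multiset.mem_toFinset.mp hx))
    exact Finset.mem_image_of_mem _ (Finset.mem_range.mpr hk)
  set m : ℕ → ℕ := fun k => s.count (ζ ^ k)
  have hcard : card s = ∑ k ∈ Finset.range p, m k := by
    rw [← Multiset.sum_count_eq_card (fun x hx => hsub (Multiset.mem_toFinset.mpr hx)),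
      Finset.sum_image hinj]
  set f : ℚ[X] := ∑ k ∈ Finset.range p, C (m k : ℚ) * X ^ k - C q
  have hfζ : aeval ζ f = 0 := by
    have : ∑ k ∈ Finset.range p, (m k : K) * ζ ^ k = q := by
      rw [← hsum, Finset.sum_multiset_count_of_subset _ _ hsub, Finset.sum_image hinj]
      simp [m, nsmul_eq_mul]
    simp [f, this]
  have hcoeff : ∀ k, 0 < k → f.coeff k = if k < p then (m k : ℚ) else 0 := by
    intro k hk
    simp [f, coeff_C, hk.ne', finsetSum_coeff]
  have hdeg : f.natDegree < p := by
    have : f.natDegree ≤ p - 1 := natDegree_le_iff_coeff_eq_zero.mpr fun N hN => by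
      rw [hcoeff N (by omega), if_neg (by omega)]
    have := hp.out.pos
    omega
  have hm : ∀ k, 0 < k → k < p → m k = m 1 := by
    intro k hk0 hkp
    have := (hζ.coeff_eq_leadingCoeff_of_aeval_eq_zero hdeg hfζ hkp).trans
      (hζ.coeff_eq_leadingCoeff_of_aeval_eq_zero hdeg hfζ hp.out.one_lt).symm
    rw [hcoeff k hk0, hcoeff 1 one_pos, if_pos hkp, if_pos hp.out.one_lt] at this
    exact_mod_cast this
  have hm1 : 1 ≤ m 1 := by simpa [m] using Multiset.one_le_count_iff_mem.mpr hζs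
  calc p - 1 = ∑ k ∈ Finset.Ico 1 p, 1 := by simp
    _ ≤ ∑ k ∈ Finset.Ico 1 p, m k := Finset.sum_le_sum fun k hk => by
          rw [Finset.mem_Ico] at hk
          rw [hm k hk.1 hk.2]
          exact hm1
    _ ≤ card s := hcard ▸ Finset.sum_le_sum_of_subset fun k hk =>
          Finset.mem_range.mpr (Finset.mem_Ico.mp hk).2

namespace Module.End

variable {K V : Type*} [Field K] [AddCommGroup V] [Module K V]

theorem HasEigenvalue.pow_eq_one {A : End K V} {n : ℕ} (hA : A ^ n = 1) {μ : K}
    (hμ : A.HasEigenvalue μ) : μ ^ n = 1 := by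
  obtain ⟨v, hv⟩ := hμ.exists_hasEigenvector
  have := hv.pow_apply n
  rw [hA, one_apply] at this
  exact (smul_left_injective K hv.2).eq_iff.mp (by simpa using this.symm)

variable [IsAlgClosed K] [FiniteDimensional K V]

theorem exists_hasEigenvalue_ne_one_of_pow_eq_one {A : End K V} {n : ℕ} (hn : (n : K) ≠ 0)
    (hA : A ^ n = 1) (hA1 : A ≠ 1) : ∃ μ, μ ≠ 1 ∧ A.HasEigenvalue μ := by
  by_contra! h
  have hss : A.IsSemisimple :=
    isSemisimple_of_squarefree_aeval_eq_zero (X_pow_sub_one_separable_iff.mpr hn).squarefree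
      (by simp [hA])
  have htop : A.eigenspace 1 = ⊤ := by
    rw [← hss.iSup_eigenspace_eq_top]
    refine le_antisymm (le_iSup _ 1) (iSup_le fun μ => ?_)
    rcases eq_or_ne μ 1 with rfl | hμ
    · exact le_rfl
    · simp [not_not.mp (hasEigenvalue_iff.not.mp (h μ hμ))]
  refine hA1 (LinearMap.ext fun v => ?_)
  simpa using mem_eigenspace_iff.mp (htop ▸ Submodule.mem_top : v ∈ A.eigenspace 1)

theorem sub_one_le_finrank_of_pow_eq_one [CharZero K] {p : ℕ} [Fact p.Prime] {A : End K V}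
    (hA : A ^ p = 1) (hA1 : A ≠ 1) {q : ℚ} (htr : LinearMap.trace K V A = q) :
    p - 1 ≤ finrank K V := by
  have hsplits := IsAlgClosed.splits A.charpoly
  have hroots : ∀ μ, μ ∈ A.charpoly.roots ↔ A.HasEigenvalue μ := fun μ => by
    rw [mem_roots A.charpoly_monic.ne_zero, hasEigenvalue_iff_isRoot_charpoly]
  obtain ⟨μ, hμ1, hμ⟩ := exists_hasEigenvalue_ne_one_of_pow_eq_one
    (Nat.cast_ne_zero.mpr (Fact.out : p.Prime).ne_zero) hA hA1
  rw [← A.charpoly_natDegree, ← splits_iff_card_roots.mp hsplits]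
  refine Multiset.sub_one_le_card_of_pow_eq_one_of_sum_eq_ratCast
    (fun x hx => ((hroots x).mp hx).pow_eq_one hA) ((hroots μ).mpr hμ) hμ1 (q := q) ?_
  rw [← trace_eq_sum_roots_charpoly_of_splits hsplits, htr]

end Module.End

theorem FDRep.sub_one_le_finrank_of_orderOf_eq {K G : Type} [Field K] [IsAlgClosed K]
    [CharZero K] [Monoid G] (V : FDRep K G) {p : ℕ} [Fact p.Prime] {g : G} (hg : orderOf g = p)
    (hρg : V.ρ g ≠ 1) {q : ℚ} (hq : V.character g = q) : p - 1 ≤ finrank K V :=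
  End.sub_one_le_finrank_of_pow_eq_one (by rw [← map_pow, ← hg, pow_orderOf_eq_one, map_one])
    hρg hq

theorem Matrix.ProjectiveSpecialLinearGroup.exists_orderOf_eq_prime (R : Type*) [CommRing R]
    [Nontrivial R] (p : ℕ) [Fact p.Prime] [CharP R p] :
    ∃ g : ProjectiveSpecialLinearGroup (Fin 2) R, orderOf g = p := by
  set u : SpecialLinearGroup (Fin 2) R := SpecialLinearGroup.map (Int.castRingHom R) ModularGroup.T
  have hu : ∀ n : ℕ, ((u ^ n : SpecialLinearGroup (Fin 2) R) : Matrix (Fin 2) (Fin 2) R) =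
      !![1, (n : R); 0, 1] := by
    intro n
    rw [← map_pow, SpecialLinearGroup.map_apply_coe, RingHom.mapMatrix_apply, ← zpow_natCast,
      ModularGroup.coe_T_zpow]
    ext i j; fin_cases i <;> fin_cases j <;> simp
  refine ⟨QuotientGroup.mk u, orderOf_eq_prime ?_ ?_⟩
  · have : u ^ p = 1 := Subtype.ext <| by
      rw [hu, CharP.cast_eq_zero, SpecialLinearGroup.coe_one, Matrix.one_fin_two]
    rw [← QuotientGroup.mk_pow, this, QuotientGroup.mk_one]
  · rw [Ne, QuotientGroup.eq_one_iff, SpecialLinearGroup.mem_center_iff]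
    rintro ⟨r, -, hr⟩
    have h01 := congrArg (· 0 1) (hr.trans (by simpa using hu 1))
    simp at h01

theorem stmt6_general (G : Type) [Group G] (M : Subgroup G) [hM : M.Normal]
    (hmin : ∀ K : Subgroup G, K.Normal → K ≤ M → K = ⊥ ∨ K = M)
    (e : ↥M ≃* Matrix.ProjectiveSpecialLinearGroup (Fin 2) (ZMod 7)) :
    ∀ χ : G → ℂ, IsIrrChar G χ → RatValued χ → 1 < (χ 1).re → ¬ KerContains χ M →
      (6 : ℝ) ≤ (χ 1).re := by
  rintro χ ⟨V, -, hVχ⟩ hrat - hker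
  have : Fact (Nat.Prime 7) := ⟨by norm_num⟩
  obtain ⟨g, hg⟩ := Matrix.ProjectiveSpecialLinearGroup.exists_orderOf_eq_prime (ZMod 7) 7
  have hu : orderOf (e.symm g : G) = 7 := by rw [Subgroup.orderOf_coe, e.symm.orderOf_eq, hg]
  have hMker : ¬ M ≤ V.ρ.ker := fun hle => hker fun n hn => by
    rw [← hVχ, ← hVχ]
    show LinearMap.trace ℂ V (V.ρ n) = LinearMap.trace ℂ V (V.ρ 1)
    rw [MonoidHom.mem_ker.mp (hle hn), V.ρ.map_one]
  have hker_inf : V.ρ.ker ⊓ M = ⊥ :=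
    (hmin _ inferInstance inf_le_right).resolve_right fun h => hMker (h ▸ inf_le_left)
  have hρu : V.ρ (e.symm g) ≠ 1 := fun h => by
    have hmem : (e.symm g : G) ∈ V.ρ.ker ⊓ M := ⟨h, (e.symm g).2⟩
    rw [hker_inf, Subgroup.mem_bot] at hmem
    simp [hmem] at hu
  obtain ⟨q, hq⟩ := hrat (e.symm g)
  have h6 := V.sub_one_le_finrank_of_orderOf_eq hu hρu (q := q) (by rw [hVχ, hq])
  rw [← hVχ, FDRep.char_one, Complex.natCast_re]
  exact_mod_cast h6

/-- If `M ≅ PSL(2,7)` is a minimal normal subgroup of `G`, then every non-linear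
rational-valued irreducible character of `G` whose kernel does not contain `M` has degree
at least `6`. -/
theorem stmt6 (G : Type) [Group G] [Fintype G] (M : Subgroup G) [hM : M.Normal]
    (hbot : M ≠ ⊥)
    (hmin : ∀ K : Subgroup G, K.Normal → K ≤ M → K = ⊥ ∨ K = M)
    (e : ↥M ≃* Matrix.ProjectiveSpecialLinearGroup (Fin 2) (ZMod 7)) :
    ∀ χ : G → ℂ, IsIrrChar G χ → RatValued χ → 1 < (χ 1).re → ¬ KerContains χ M →
      (6 : ℝ) ≤ (χ 1).re :=
  stmt6_general G M (hM := hM) hmin e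
end
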